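/- Let S be a real 2n×2n symmetric positive definite symplectic matrix and let e ∈ ℝ^{2n} satisfy S e = λ e with λ > 0. Then, regarding e as a vector in ℂ^{2n} and setting P_J := (1/2)(I − iJ), one has (P_J S P_J)(P_J e) = (1/2)(λ + λ⁻¹) · (P_J e) = cosh(log λ) · (P_J e). -/

import Mathlib

open Matrix

/-- The standard symplectic matrix `J = [[0, −I],[I, 0]]` in `n×n` blocks. -/
noncomputable def Jmat (n : ℕ) : Matrix (Fin n ⊕ Fin n) (Fin n ⊕ Fin n) ℝ :=
  Matrix.fromBlocks 0 (-1) 1 0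

/-- The projection `P_J = (1/2)(I − iJ)` onto the `+i`-eigenspace of `J` in `ℂ^{2n}`. -/
noncomputable def PJ (n : ℕ) : Matrix (Fin n ⊕ Fin n) (Fin n ⊕ Fin n) ℂ :=
  (1 / 2 : ℂ) • ((1 : Matrix (Fin n ⊕ Fin n) (Fin n ⊕ Fin n) ℂ) -
    Complex.I • (Jmat n).map Complex.ofReal)

lemma Jmat_sq (n : ℕ) : Jmat n * Jmat n = -1 := by
  ext i j
  simp [Jmat, Matrix.fromBlocks_multiply]
  cases i <;> cases j <;> simp [Matrix.one_apply, eq_comm]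

/-- Let `S` be a real `2n×2n` symmetric positive definite symplectic matrix and
let `e ∈ ℝ^{2n}` satisfy `S e = λ e` with `λ > 0`. Then, regarding `e` as a vector in `ℂ^{2n}`,
`(P_J S P_J)(P_J e) = (1/2)(λ + λ⁻¹)·(P_J e) = cosh(log λ)·(P_J e)`. -/
theorem statement3 (n : ℕ) (hn : 1 ≤ n)
    (S : Matrix (Fin n ⊕ Fin n) (Fin n ⊕ Fin n) ℝ)
    (hsym : S.IsSymm) (hpos : S.PosDef)
    (hsymp : Sᵀ * Jmat n * S = Jmat n)
    (e : (Fin n ⊕ Fin n) → ℝ) (lam : ℝ) (hlam : 0 < lam)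
    (heig : S.mulVec e = lam • e) :
    (PJ n * (S.map Complex.ofReal) * PJ n).mulVec ((PJ n).mulVec fun i => (e i : ℂ)) =
      ((1 / 2 : ℂ) * ((lam : ℂ) + (lam : ℂ)⁻¹)) • ((PJ n).mulVec fun i => (e i : ℂ)) ∧
    (PJ n * (S.map Complex.ofReal) * PJ n).mulVec ((PJ n).mulVec fun i => (e i : ℂ)) =
      ((Real.cosh (Real.log lam) : ℝ) : ℂ) • ((PJ n).mulVec fun i => (e i : ℂ)) := by
  classical
  set Jc := (Jmat n).map Complex.ofReal with hJc
  set Sc := S.map Complex.ofReal with hSc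
  set ec : (Fin n ⊕ Fin n) → ℂ := fun i => (e i : ℂ) with hec
  -- real eigenvector fact for J e
  have hJe : S.mulVec ((Jmat n).mulVec e) = lam⁻¹ • (Jmat n).mulVec e := by
    have hS : S * Jmat n * S = Jmat n := by rwa [hsym.eq] at hsymp
    have h1 : S.mulVec ((Jmat n).mulVec (S.mulVec e)) = (Jmat n).mulVec e := by
      rw [Matrix.mulVec_mulVec, Matrix.mulVec_mulVec, hS]
    rw [heig, Matrix.mulVec_smul, Matrix.mulVec_smul] at h1
    have h2 : lam⁻¹ • (lam • (S.mulVec ((Jmat n).mulVec e))) = lam⁻¹ • ((Jmat n).mulVec e) := by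
      rw [h1]
    rwa [smul_smul, inv_mul_cancel₀ hlam.ne', one_smul] at h2
  -- complexify
  have hmap : ∀ (A : Matrix (Fin n ⊕ Fin n) (Fin n ⊕ Fin n) ℝ) (v : (Fin n ⊕ Fin n) → ℝ),
      (A.map Complex.ofReal).mulVec (fun i => ((v i : ℂ))) = fun i => ((A.mulVec v i : ℝ) : ℂ) := by
    intro A v
    funext i
    exact (RingHom.map_mulVec Complex.ofRealHom A v i).symm
  have hA : Sc.mulVec ec = (lam : ℂ) • ec := by
    rw [hSc, hec, hmap, heig]
    funext i; simp
  set u : (Fin n ⊕ Fin n) → ℂ := Jc.mulVec ec with hu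
  have hB : Sc.mulVec u = ((lam : ℂ))⁻¹ • u := by
    rw [hu, hJc, hec, hmap, hSc, hmap, hJe]
    funext i
    simp only [Pi.smul_apply, smul_eq_mul]
    push_cast
    ring
  have hJu : Jc.mulVec u = -ec := by
    rw [hu, hJc, hec, hmap, hmap, Matrix.mulVec_mulVec, Jmat_sq]
    funext i
    simp [Matrix.neg_mulVec, Matrix.one_mulVec, hec]
  -- formula for PJ.mulVec
  have hP : ∀ v : (Fin n ⊕ Fin n) → ℂ,
      (PJ n).mulVec v = (1/2 : ℂ) • v - (Complex.I/2) • Jc.mulVec v := by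
    intro v
    rw [PJ, Matrix.smul_mulVec, Matrix.sub_mulVec, Matrix.one_mulVec,
      Matrix.smul_mulVec, ← hJc, smul_sub, smul_smul]
    ring_nf
  have key : (PJ n * Sc * PJ n).mulVec ((PJ n).mulVec ec) =
      ((1 / 2 : ℂ) * ((lam : ℂ) + (lam : ℂ)⁻¹)) • ((PJ n).mulVec ec) := by
    rw [Matrix.mulVec_mulVec]
    have assoc : PJ n * Sc * PJ n * PJ n = PJ n * (Sc * (PJ n * PJ n)) := by
      noncomm_ring
    rw [assoc, ← Matrix.mulVec_mulVec, ← Matrix.mulVec_mulVec, ← Matrix.mulVec_mulVec]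
    have hPP : (PJ n).mulVec ((PJ n).mulVec ec) = (PJ n).mulVec ec := by
      rw [hP ec, hP, Matrix.mulVec_sub, Matrix.mulVec_smul, Matrix.mulVec_smul, ← hu, hJu]
      match_scalars <;> first | ring1 | (ring_nf; norm_num [Complex.I_sq])
    rw [hPP, hP ec, Matrix.mulVec_sub, Matrix.mulVec_smul, Matrix.mulVec_smul, hA, ← hu, hB,
      hP, Matrix.mulVec_sub, Matrix.mulVec_smul, Matrix.mulVec_smul, Matrix.mulVec_smul,
      Matrix.mulVec_smul, ← hu, hJu]
    have hlamne : (lam : ℂ) ≠ 0 := by exact_mod_cast hlam.ne'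
    match_scalars <;> field_simp <;> ring_nf <;> rw [Complex.I_sq] <;> ring
  refine ⟨key, ?_⟩
  rw [key]
  congr 1
  rw [Real.cosh_eq, Real.exp_log hlam, Real.exp_neg, Real.exp_log hlam]
  push_cast
  ring
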